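/- arXiv:2101.04208 — 3 statements merged into one kernel-verified Lean document; each statement's English description precedes it below -/
import Mathlib

section
/- Let n ∈ ℕ, p ∈ [1/2,1), q = 1−p, and let X be a random variable with P(X = √(q/p)) = p and P(X = −√(p/q)) = q. For all ε > 0 and γ > 0 the quantity n^{−1/2}·( γ·|E[X³·1_{|X|<ε√n}]| + sup_{0<z<ε√n} z·E[X²·1_{|X|≥z}] ) equals: ε, if n·ε² ≤ q/p; γ·√(q³/(np)) + max{ √(q/(np)), ε·p }, if q/p < n·ε² ≤ p/q; and γ·(p−q)/√(n·p·q) + max{ √(q/(np)), √(p³/(n·q)) }, if n·ε² > p/q. -/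
open MeasureTheory Real Set

/-- Truncated third moment `E[X³·1_{|X|<z}]`. -/
noncomputable def mu3 {Ω : Type*} [MeasurableSpace Ω] (μ : Measure Ω) (X : Ω → ℝ) (z : ℝ) : ℝ :=
  ∫ ω, (if |X ω| < z then (X ω) ^ 3 else 0) ∂μ

/-- Truncated second moment `E[X²·1_{|X|≥z}]`. -/
noncomputable def sig2 {Ω : Type*} [MeasurableSpace Ω] (μ : Measure Ω) (X : Ω → ℝ) (z : ℝ) : ℝ :=
  ∫ ω, (if z ≤ |X ω| then (X ω) ^ 2 else 0) ∂μ

/-!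
`X` takes only the values `a = √(q/p)` and `-c = -√(p/q)`, with `a ≤ c`, so the truncated
moments are finite sums: `μ(z) = p a³ 1{a < z} - q c³ 1{c < z}`, and `z σ²(z)` equals `z` on
`(0, a]`, `p z` on `(a, c]` and `0` beyond `c`. Hence the supremum over `(0, T)` is
`max (min T a) (p · min T c)`, and the three regimes are the positions of `T = ε√n` relative
to `a ≤ c`, i.e. of `n ε²` relative to `q/p ≤ p/q`.
-/

theorem integral_comp_of_two_point {Ω α : Type*} [MeasurableSpace Ω] [MeasurableSpace α]
    [MeasurableSingletonClass α] {μ : Measure Ω} [IsProbabilityMeasure μ] {X : Ω → α}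
    (hX : Measurable X) {a b : α} (hab : a ≠ b) {p q : ℝ} (hp : 0 ≤ p) (hq : 0 ≤ q)
    (hpq : p + q = 1) (hXa : μ {ω | X ω = a} = ENNReal.ofReal p)
    (hXb : μ {ω | X ω = b} = ENNReal.ofReal q) (g : α → ℝ) :
    ∫ ω, g (X ω) ∂μ = p * g a + q * g b := by
  set A := {ω | X ω = a}
  set B := {ω | X ω = b}
  have hA : MeasurableSet A := hX (measurableSet_singleton a)
  have hB : MeasurableSet B := hX (measurableSet_singleton b)
  have hAB : Disjoint A B := Set.disjoint_left.mpr fun ω (ha : X ω = a) (hb : X ω = b) =>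
    hab (ha.symm.trans hb)
  have h_ae : ∀ᵐ ω ∂μ, ω ∈ A ∪ B := by
    refine ae_iff.mpr ((prob_compl_eq_zero_iff (hA.union hB)).mpr ?_)
    rw [measure_union hAB hB, hXa, hXb, ← ENNReal.ofReal_add hp hq, hpq, ENNReal.ofReal_one]
  have h_eq : (fun ω => g (X ω))
      =ᵐ[μ] A.indicator (fun _ => g a) + B.indicator (fun _ => g b) := by
    filter_upwards [h_ae] with ω hω
    rcases hω with hωA | hωB
    · simp [Set.indicator_of_mem hωA, Set.indicator_of_notMem (Set.disjoint_left.mp hAB hωA),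
        show X ω = a from hωA]
    · simp [Set.indicator_of_mem hωB, Set.indicator_of_notMem (Set.disjoint_right.mp hAB hωB),
        show X ω = b from hωB]
  rw [integral_congr_ae h_eq, integral_add' ((integrable_const _).indicator hA)
      ((integrable_const _).indicator hB), integral_indicator_const _ hA,
    integral_indicator_const _ hB, measureReal_def, measureReal_def, hXa, hXb,
    ENNReal.toReal_ofReal hp, ENNReal.toReal_ofReal hq, smul_eq_mul, smul_eq_mul]

theorem mu3_of_two_point {Ω : Type*} [MeasurableSpace Ω] {μ : Measure Ω} [IsProbabilityMeasure μ]
    {X : Ω → ℝ} (hX : Measurable X) {a c p q : ℝ} (ha : 0 < a) (hc : 0 < c) (hp : 0 ≤ p)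
    (hq : 0 ≤ q) (hpq : p + q = 1) (hXa : μ {ω | X ω = a} = ENNReal.ofReal p)
    (hXc : μ {ω | X ω = -c} = ENNReal.ofReal q) (z : ℝ) :
    mu3 μ X z = (if a < z then p * a ^ 3 else 0) - (if c < z then q * c ^ 3 else 0) := by
  rw [mu3, integral_comp_of_two_point hX (by linarith) hp hq hpq hXa hXc
    (fun x => if |x| < z then x ^ 3 else 0)]
  simp only [abs_of_pos ha, abs_neg, abs_of_pos hc]
  split_ifs <;> ring

theorem sig2_of_two_point {Ω : Type*} [MeasurableSpace Ω] {μ : Measure Ω} [IsProbabilityMeasure μ]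
    {X : Ω → ℝ} (hX : Measurable X) {a c p q : ℝ} (ha : 0 < a) (hc : 0 < c) (hp : 0 ≤ p)
    (hq : 0 ≤ q) (hpq : p + q = 1) (hXa : μ {ω | X ω = a} = ENNReal.ofReal p)
    (hXc : μ {ω | X ω = -c} = ENNReal.ofReal q) (z : ℝ) :
    sig2 μ X z = (if z ≤ a then p * a ^ 2 else 0) + (if z ≤ c then q * c ^ 2 else 0) := by
  rw [sig2, integral_comp_of_two_point hX (by linarith) hp hq hpq hXa hXc
    (fun x => if z ≤ |x| then x ^ 2 else 0)]
  simp only [abs_of_pos ha, abs_neg, abs_of_pos hc, neg_sq]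
  split_ifs <;> ring

theorem exists_mem_Ioo_le_lt {w b T : ℝ} (hb : 0 < b) (hT : 0 < T) (hw : w < min T b) :
    ∃ z ∈ Ioo 0 T, z ≤ b ∧ w < z := by
  obtain ⟨hwT, hwb⟩ := lt_min_iff.mp hw
  refine ⟨min b (max (T / 2) ((w + T) / 2)), ⟨?_, ?_⟩, min_le_left _ _, ?_⟩
  · exact lt_min hb (lt_max_of_lt_left (half_pos hT))
  · exact min_lt_of_right_lt (max_lt (by linarith) (by linarith))
  · exact lt_min hwb (lt_max_of_lt_right (by linarith))

theorem sSup_image_Ioo_of_piecewise {f : ℝ → ℝ} {a c p T : ℝ} (ha : 0 < a) (hac : a ≤ c)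
    (hp : 0 < p) (hp1 : p ≤ 1) (hT : 0 < T) (hf_le : ∀ z ≤ a, f z = z)
    (hf_mid : ∀ z, a < z → z ≤ c → f z = z * p) (hf_gt : ∀ z, c < z → f z = 0) :
    sSup (f '' Ioo 0 T) = max (min T a) (min T c * p) := by
  have hf_ge : ∀ z, 0 < z → z ≤ c → z * p ≤ f z := by
    intro z hz hzc
    rcases le_or_gt z a with hza | hza
    · rw [hf_le z hza]; nlinarith
    · rw [hf_mid z hza hzc]
  refine csSup_eq_of_forall_le_of_forall_lt_exists_gt (Set.image_nonempty.mpr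
    (nonempty_Ioo.mpr hT)) ?_ ?_
  · rintro _ ⟨z, ⟨hz0, hzT⟩, rfl⟩
    rcases le_or_gt z a with hza | hza
    · rw [hf_le z hza]; exact le_max_of_le_left (le_min hzT.le hza)
    rcases le_or_gt z c with hzc | hzc
    · rw [hf_mid z hza hzc]
      exact le_max_of_le_right (mul_le_mul_of_nonneg_right (le_min hzT.le hzc) hp.le)
    · rw [hf_gt z hzc]; exact le_max_of_le_left (le_min hT.le ha.le)
  · intro w hw
    rcases lt_max_iff.mp hw with hwa | hwc
    · obtain ⟨z, hz, hza, hwz⟩ := exists_mem_Ioo_le_lt ha hT hwa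
      exact ⟨f z, mem_image_of_mem f hz, by rwa [hf_le z hza]⟩
    · have hwp : w / p < min T c := by rwa [div_lt_iff₀ hp]
      obtain ⟨z, hz, hzc, hwz⟩ := exists_mem_Ioo_le_lt (ha.trans_le hac) hT hwp
      refine ⟨f z, mem_image_of_mem f hz, ?_⟩
      calc w < z * p := (div_lt_iff₀ hp).mp hwz
        _ ≤ f z := hf_ge z hz.1 hzc

theorem sqrt_div_eq_div_sqrt_mul {p q : ℝ} (hp : 0 < p) (hq : 0 < q) :
    √(q / p) = q / √(p * q) := by
  rw [sqrt_eq_iff_mul_self_eq_of_pos (by positivity), div_mul_div_comm,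
    mul_self_sqrt (by positivity)]
  field_simp

theorem mu3_standard_two_point {Ω : Type*} [MeasurableSpace Ω] {μ : Measure Ω}
    [IsProbabilityMeasure μ] {X : Ω → ℝ} (hX : Measurable X) {p q : ℝ} (hp : 0 < p) (hq : 0 < q)
    (hpq : p + q = 1) (hXp : μ {ω | X ω = √(q / p)} = ENNReal.ofReal p)
    (hXq : μ {ω | X ω = -√(p / q)} = ENNReal.ofReal q) (z : ℝ) :
    mu3 μ X z = (if q / √(p * q) < z then q ^ 2 / √(p * q) else 0)
      - (if p / √(p * q) < z then p ^ 2 / √(p * q) else 0) := by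
  rw [sqrt_div_eq_div_sqrt_mul hp hq] at hXp
  rw [sqrt_div_eq_div_sqrt_mul hq hp, mul_comm q] at hXq
  set s := √(p * q)
  have hs0 : 0 < s := by positivity
  have hs : s ^ 2 = p * q := sq_sqrt (by positivity)
  have hpa : p * (q / s) ^ 3 = q ^ 2 / s := by
    rw [div_pow, pow_succ s 2, hs]; field_simp
  have hqc : q * (p / s) ^ 3 = p ^ 2 / s := by
    rw [div_pow, pow_succ s 2, hs]; field_simp
  rw [mu3_of_two_point hX (by positivity) (by positivity) hp.le hq.le hpq hXp hXq, hpa, hqc]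

theorem sSup_mul_sig2_standard_two_point {Ω : Type*} [MeasurableSpace Ω] {μ : Measure Ω}
    [IsProbabilityMeasure μ] {X : Ω → ℝ} (hX : Measurable X) {p q : ℝ} (hq : 0 < q)
    (hqp : q ≤ p) (hpq : p + q = 1) (hXp : μ {ω | X ω = √(q / p)} = ENNReal.ofReal p)
    (hXq : μ {ω | X ω = -√(p / q)} = ENNReal.ofReal q) {T : ℝ} (hT : 0 < T) :
    sSup ((fun z => z * sig2 μ X z) '' Ioo 0 T)
      = max (min T (q / √(p * q))) (min T (p / √(p * q)) * p) := by
  have hp : 0 < p := hq.trans_le hqp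
  rw [sqrt_div_eq_div_sqrt_mul hp hq] at hXp
  rw [sqrt_div_eq_div_sqrt_mul hq hp, mul_comm q] at hXq
  set s := √(p * q)
  have hs : s ^ 2 = p * q := sq_sqrt (by positivity)
  have hs0 : 0 < s := by positivity
  have hpa : p * (q / s) ^ 2 = q := by rw [div_pow, hs]; field_simp
  have hqc : q * (p / s) ^ 2 = p := by rw [div_pow, hs]; field_simp
  have hac : q / s ≤ p / s := div_le_div_of_nonneg_right hqp (sqrt_nonneg _)
  have hsig := sig2_of_two_point hX (by positivity) (by positivity) hp.le hq.le hpq hXp hXq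
  refine sSup_image_Ioo_of_piecewise (by positivity) hac hp (by linarith) hT ?_ ?_ ?_
  · intro z hz
    rw [hsig, if_pos hz, if_pos (hz.trans hac), hpa, hqc, add_comm, hpq, mul_one]
  · intro z hz hzc
    rw [hsig, if_neg hz.not_ge, if_pos hzc, hqc, zero_add]
  · intro z hz
    rw [hsig, if_neg (hac.trans_lt hz).not_ge, if_neg hz.not_ge, add_zero, mul_zero]

/-- The Rozovskii fraction of the standard two-point law in closed form, written with
`s = √(pq)`: the atoms are `q / s = √(q/p)` and `-p / s = -√(p/q)`, and `T = ε√n`. -/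
noncomputable def standardTwoPointFraction (n : ℕ) (p q ε γ : ℝ) : ℝ :=
  let s := √(p * q)
  let T := ε * √n
  (√n)⁻¹ * (γ * |(if q / s < T then q ^ 2 / s else 0) - (if p / s < T then p ^ 2 / s else 0)|
    + max (min T (q / s)) (min T (p / s) * p))

theorem rozovskii_fraction_eq_standardTwoPointFraction {Ω : Type*} [MeasurableSpace Ω]
    {μ : Measure Ω} [IsProbabilityMeasure μ] {X : Ω → ℝ} (hX : Measurable X) {n : ℕ}
    (hn : 0 < n) {p q : ℝ} (hq : 0 < q) (hqp : q ≤ p) (hpq : p + q = 1)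
    (hXp : μ {ω | X ω = √(q / p)} = ENNReal.ofReal p)
    (hXq : μ {ω | X ω = -√(p / q)} = ENNReal.ofReal q) {ε : ℝ} (hε : 0 < ε) (γ : ℝ) :
    (√n)⁻¹ * (γ * |mu3 μ X (ε * √n)| + sSup ((fun z => z * sig2 μ X z) '' Ioo 0 (ε * √n)))
      = standardTwoPointFraction n p q ε γ := by
  have hT : 0 < ε * √n := mul_pos hε (sqrt_pos.mpr (Nat.cast_pos.mpr hn))
  rw [mu3_standard_two_point hX (hq.trans_le hqp) hq hpq hXp hXq,
    sSup_mul_sig2_standard_two_point hX hq hqp hpq hXp hXq hT, standardTwoPointFraction]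

theorem mul_sqrt_le_sqrt_iff {ε m y : ℝ} (hε : 0 ≤ ε) (hm : 0 ≤ m) (hy : 0 ≤ y) :
    ε * √m ≤ √y ↔ m * ε ^ 2 ≤ y := by
  rw [show ε * √m = √(m * ε ^ 2) by rw [sqrt_mul hm, sqrt_sq hε, mul_comm],
    sqrt_le_sqrt_iff hy]

theorem sqrt_lt_mul_sqrt_iff {ε m y : ℝ} (hε : 0 ≤ ε) (hm : 0 ≤ m) (hy : 0 ≤ y) :
    √y < ε * √m ↔ y < m * ε ^ 2 :=
  lt_iff_lt_of_le_iff_le (mul_sqrt_le_sqrt_iff hε hm hy)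

theorem sqrt_sq_div_natCast_mul {x y : ℝ} (n : ℕ) (hx : 0 ≤ x) (hy : 0 ≤ y) :
    √(x ^ 2 / (n * y)) = x / (√n * √y) := by
  rw [sqrt_div' _ (by positivity), sqrt_sq hx, sqrt_mul (Nat.cast_nonneg n)]

section StandardTwoPointFraction

variable {n : ℕ} {p q ε : ℝ}

theorem standardTwoPointFraction_of_le (hn : 0 < n) (hq : 0 < q) (hqp : q ≤ p)
    (hpq : p + q = 1) (hε : 0 < ε) (γ : ℝ) (h : n * ε ^ 2 ≤ q / p) :
    standardTwoPointFraction n p q ε γ = ε := by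
  have hp : 0 < p := hq.trans_le hqp
  have hr : 0 < √(n : ℝ) := sqrt_pos.mpr (Nat.cast_pos.mpr hn)
  have hTa : ε * √n ≤ q / √(p * q) := by
    rw [← sqrt_div_eq_div_sqrt_mul hp hq]
    exact (mul_sqrt_le_sqrt_iff hε.le n.cast_nonneg (by positivity)).mpr h
  have hTc : ε * √n ≤ p / √(p * q) := hTa.trans (div_le_div_of_nonneg_right hqp (sqrt_nonneg _))
  have hp1 : p ≤ 1 := by linarith
  have hT : 0 < ε * √n := mul_pos hε hr
  rw [standardTwoPointFraction, if_neg hTa.not_gt, if_neg hTc.not_gt, min_eq_left hTa,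
    min_eq_left hTc, max_eq_left (mul_le_of_le_one_right hT.le hp1), sub_zero, abs_zero,
    mul_zero, zero_add, mul_comm ε, inv_mul_cancel_left₀ hr.ne']

theorem standardTwoPointFraction_of_lt_of_le (hn : 0 < n) (hq : 0 < q) (hqp : q ≤ p)
    (hε : 0 < ε) (γ : ℝ) (h₁ : q / p < n * ε ^ 2) (h₂ : n * ε ^ 2 ≤ p / q) :
    standardTwoPointFraction n p q ε γ
      = γ * √(q ^ 3 / (n * p)) + max (√(q / (n * p))) (ε * p) := by
  have hp : 0 < p := hq.trans_le hqp
  have hr : 0 < √(n : ℝ) := sqrt_pos.mpr (Nat.cast_pos.mpr hn)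
  have haT : q / √(p * q) < ε * √n := by
    rw [← sqrt_div_eq_div_sqrt_mul hp hq]
    exact (sqrt_lt_mul_sqrt_iff hε.le n.cast_nonneg (by positivity)).mpr h₁
  have hTc : ε * √n ≤ p / √(p * q) := by
    rw [mul_comm p, ← sqrt_div_eq_div_sqrt_mul hq hp]
    exact (mul_sqrt_le_sqrt_iff hε.le n.cast_nonneg (by positivity)).mpr h₂
  have hq_sqrt : √(q / (n * p)) = q / (√n * √(p * q)) := by
    rw [← sqrt_sq_div_natCast_mul n hq.le (by positivity)]; congr 1; field_simp
  have hq3_sqrt : √(q ^ 3 / (n * p)) = q ^ 2 / (√n * √(p * q)) := by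
    rw [← sqrt_sq_div_natCast_mul n (by positivity) (by positivity)]; congr 1; field_simp
  rw [standardTwoPointFraction, if_pos haT, if_neg hTc.not_gt, min_eq_right haT.le,
    min_eq_left hTc, sub_zero, abs_of_pos (by positivity), hq3_sqrt, hq_sqrt, mul_add,
    mul_max_of_nonneg _ _ (inv_nonneg.mpr hr.le)]
  congr 1
  · field_simp
  · congr 1 <;> field_simp

theorem standardTwoPointFraction_of_gt (hn : 0 < n) (hq : 0 < q) (hqp : q ≤ p)
    (hpq : p + q = 1) (hε : 0 < ε) (γ : ℝ) (h : p / q < n * ε ^ 2) :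
    standardTwoPointFraction n p q ε γ
      = γ * (p - q) / √(n * p * q) + max (√(q / (n * p))) (√(p ^ 3 / (n * q))) := by
  have hp : 0 < p := hq.trans_le hqp
  have hr : 0 < √(n : ℝ) := sqrt_pos.mpr (Nat.cast_pos.mpr hn)
  have hcT : p / √(p * q) < ε * √n := by
    rw [mul_comm p, ← sqrt_div_eq_div_sqrt_mul hq hp]
    exact (sqrt_lt_mul_sqrt_iff hε.le n.cast_nonneg (by positivity)).mpr h
  have haT : q / √(p * q) < ε * √n :=
    (div_le_div_of_nonneg_right hqp (sqrt_nonneg _)).trans_lt hcT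
  have hq_sqrt : √(q / (n * p)) = q / (√n * √(p * q)) := by
    rw [← sqrt_sq_div_natCast_mul n hq.le (by positivity)]; congr 1; field_simp
  have hp3_sqrt : √(p ^ 3 / (n * q)) = p ^ 2 / (√n * √(p * q)) := by
    rw [← sqrt_sq_div_natCast_mul n (by positivity) (by positivity)]; congr 1; field_simp
  have hnpq : √(n * p * q) = √n * √(p * q) := by rw [mul_assoc, sqrt_mul (Nat.cast_nonneg n)]
  have hpq_sq : p - q = p ^ 2 - q ^ 2 := by rw [sq_sub_sq, hpq, one_mul]
  rw [standardTwoPointFraction, if_pos haT, if_pos hcT, min_eq_right haT.le,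
    min_eq_right hcT.le, abs_of_nonpos (by rw [sub_nonpos]; gcongr), hp3_sqrt, hq_sqrt, hnpq,
    hpq_sq, mul_add, mul_max_of_nonneg _ _ (inv_nonneg.mpr hr.le)]
  congr 1
  · field_simp; ring
  · congr 1 <;> field_simp

end StandardTwoPointFraction

theorem rozovskii_fraction_gstar_two_point_general
    {Ω : Type*} [MeasurableSpace Ω] (μ : Measure Ω) [IsProbabilityMeasure μ]
    (n : ℕ) (hn : 0 < n) (p : ℝ) (hp : p ∈ Set.Ico (1/2 : ℝ) 1) (q : ℝ) (hq : q = 1 - p)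
    (X : Ω → ℝ) (hX : Measurable X)
    (hXp : μ {ω | X ω = Real.sqrt (q / p)} = ENNReal.ofReal p)
    (hXq : μ {ω | X ω = -Real.sqrt (p / q)} = ENNReal.ofReal q)
    (ε γ : ℝ) (hε : 0 < ε) :
    ((n : ℝ) * ε ^ 2 ≤ q / p →
      (Real.sqrt n)⁻¹ *
        (γ * |mu3 μ X (ε * Real.sqrt n)| +
          sSup ((fun z => z * sig2 μ X z) '' Set.Ioo (0 : ℝ) (ε * Real.sqrt n))) = ε) ∧
    (q / p < (n : ℝ) * ε ^ 2 → (n : ℝ) * ε ^ 2 ≤ p / q →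
      (Real.sqrt n)⁻¹ *
        (γ * |mu3 μ X (ε * Real.sqrt n)| +
          sSup ((fun z => z * sig2 μ X z) '' Set.Ioo (0 : ℝ) (ε * Real.sqrt n)))
        = γ * Real.sqrt (q ^ 3 / ((n : ℝ) * p)) +
            max (Real.sqrt (q / ((n : ℝ) * p))) (ε * p)) ∧
    (p / q < (n : ℝ) * ε ^ 2 →
      (Real.sqrt n)⁻¹ *
        (γ * |mu3 μ X (ε * Real.sqrt n)| +
          sSup ((fun z => z * sig2 μ X z) '' Set.Ioo (0 : ℝ) (ε * Real.sqrt n)))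
        = γ * (p - q) / Real.sqrt ((n : ℝ) * p * q) +
            max (Real.sqrt (q / ((n : ℝ) * p))) (Real.sqrt (p ^ 3 / ((n : ℝ) * q)))) := by
  obtain ⟨hp_half, hp_one⟩ := hp
  have hq0 : 0 < q := by linarith
  have hqp : q ≤ p := by linarith
  have hpq : p + q = 1 := by linarith
  rw [rozovskii_fraction_eq_standardTwoPointFraction hX hn hq0 hqp hpq hXp hXq hε]
  exact ⟨standardTwoPointFraction_of_le hn hq0 hqp hpq hε γ,
    standardTwoPointFraction_of_lt_of_le hn hq0 hqp hε γ,
    standardTwoPointFraction_of_gt hn hq0 hqp hpq hε γ⟩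

theorem rozovskii_fraction_gstar_two_point
    {Ω : Type*} [MeasurableSpace Ω] (μ : Measure Ω) [IsProbabilityMeasure μ]
    (n : ℕ) (hn : 0 < n) (p : ℝ) (hp : p ∈ Set.Ico (1/2 : ℝ) 1) (q : ℝ) (hq : q = 1 - p)
    (X : Ω → ℝ) (hX : Measurable X)
    (hXp : μ {ω | X ω = Real.sqrt (q / p)} = ENNReal.ofReal p)
    (hXq : μ {ω | X ω = -Real.sqrt (p / q)} = ENNReal.ofReal q)
    (ε γ : ℝ) (hε : 0 < ε) (hγ : 0 < γ) :
    ((n : ℝ) * ε ^ 2 ≤ q / p →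
      (Real.sqrt n)⁻¹ *
        (γ * |mu3 μ X (ε * Real.sqrt n)| +
          sSup ((fun z => z * sig2 μ X z) '' Set.Ioo (0 : ℝ) (ε * Real.sqrt n))) = ε) ∧
    (q / p < (n : ℝ) * ε ^ 2 → (n : ℝ) * ε ^ 2 ≤ p / q →
      (Real.sqrt n)⁻¹ *
        (γ * |mu3 μ X (ε * Real.sqrt n)| +
          sSup ((fun z => z * sig2 μ X z) '' Set.Ioo (0 : ℝ) (ε * Real.sqrt n)))
        = γ * Real.sqrt (q ^ 3 / ((n : ℝ) * p)) +
            max (Real.sqrt (q / ((n : ℝ) * p))) (ε * p)) ∧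
    (p / q < (n : ℝ) * ε ^ 2 →
      (Real.sqrt n)⁻¹ *
        (γ * |mu3 μ X (ε * Real.sqrt n)| +
          sSup ((fun z => z * sig2 μ X z) '' Set.Ioo (0 : ℝ) (ε * Real.sqrt n)))
        = γ * (p - q) / Real.sqrt ((n : ℝ) * p * q) +
            max (Real.sqrt (q / ((n : ℝ) * p))) (Real.sqrt (p ^ 3 / ((n : ℝ) * q)))) :=
  rozovskii_fraction_gstar_two_point_general μ n hn p hp q hq X hX hXp hXq ε γ hε
end

section
/- Let n ∈ ℕ, ε > 1, γ > 0, p ∈ [1/2,1), q = 1−p, and let X be a random variable with P(X = √(q/p)) = p and P(X = −√(p/q)) = q. Define L = n^{−1/2}·( (γ/ε)·|E[X³·1_{|X|<ε√n}]| + sup_{0<z<ε√n} min{z,√n}·E[X²·1_{|X|≥z}] ). Then: L = (γ/ε)·√(q³/(np)) + 1, if n ≤ q/p < n·ε² ≤ p/q; L = γ·(p−q)/(ε·√(n·p·q)) + 1, if n ≤ q/p ≤ p/q < n·ε²; L = (γ/ε)·√(q³/(np)) + max{ √(q/(np)), p }, if q/p < n and n·ε² ≤ p/q; L = γ·(p−q)/(ε·√(n·p·q))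 + max{ √(q/(np)), p }, if q/p < n ≤ p/q < n·ε²; and L = γ·(p−q)/(ε·√(n·p·q)) + max{ √(q/(np)), √(p³/(n·q)) }, if n > p/q. -/
open MeasureTheory Real Set

/-!
The law of `X` puts mass `p` at `a = √(q/p)` and mass `q` at `-b` with `b = √(p/q)`, and
`p a² = q`, `q b² = p`. Hence `mu3 t = q a·1[a < t] - p b·1[b < t]` and
`sig2 z = q·1[z ≤ a] + p·1[z ≤ b]`. Since `a ≤ 1 ≤ b` and `a < ε√n`, the function
`z ↦ min{z,√n}·sig2 z` is a step function on `(0, ε√n)` whose supremum is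
`max{min{a,√n}, p·min{b,√n}}`, attained at `z = a` or `z = min{b,√n}`. The five cases are
the possible positions of `n` and `nε²` relative to `a² = q/p` and `b² = p/q`, and in each the
closed forms follow from `p b - q a = (p - q)/√(pq)` (which uses `p + q = 1`).
-/

section Arithmetic

variable {p q x y n : ℝ}

theorem div_le_div_symm_of_le (hq : 0 < q) (hqp : q ≤ p) : q / p ≤ p / q :=
  ((div_le_one (hq.trans_le hqp)).2 hqp).trans ((one_le_div hq).2 hqp)

theorem mul_sq_sqrt_div (hp : 0 < p) (hq : 0 ≤ q) : p * √(q / p) ^ 2 = q := by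
  rw [sq_sqrt (div_nonneg hq hp.le), mul_div_cancel₀ _ hp.ne']

theorem sqrt_div_ne_neg_sqrt_div (hp : 0 < p) (hq : 0 < q) : √(q / p) ≠ -√(p / q) := by
  have := sqrt_pos.2 (div_pos hq hp); have := sqrt_pos.2 (div_pos hp hq); linarith

theorem inv_sqrt_mul_sqrt_div (hn : 0 ≤ n) : (√n)⁻¹ * √(x / y) = √(x / (n * y)) := by
  rw [show x / (n * y) = x / y * n⁻¹ by ring, sqrt_mul' _ (inv_nonneg.2 hn), sqrt_inv, mul_comm]

theorem inv_sqrt_mul_mul_sqrt_div (hx : 0 ≤ x) (hn : 0 ≤ n) :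
    (√n)⁻¹ * (x * √(x / y)) = √(x ^ 3 / (n * y)) := by
  rw [show x ^ 3 / (n * y) = x ^ 2 * (x / (n * y)) by ring, sqrt_mul (sq_nonneg x), sqrt_sq hx,
    ← inv_sqrt_mul_sqrt_div hn, mul_left_comm]

theorem inv_sqrt_mul_sub_eq_div_sqrt (hp : 0 < p) (hq : 0 < q) (hpq : p + q = 1) (hn : 0 < n) :
    (√n)⁻¹ * (p * √(p / q) - q * √(q / p)) = (p - q) / √(n * p * q) := by
  have hp' : √(p / q) * √(p * q) = p := by
    rw [← sqrt_mul (div_pos hp hq).le, show p / q * (p * q) = p ^ 2 by field_simp, sqrt_sq hp.le]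
  have hq' : √(q / p) * √(p * q) = q := by
    rw [← sqrt_mul (div_pos hq hp).le, show q / p * (p * q) = q ^ 2 by field_simp, sqrt_sq hq.le]
  have hs : 0 < √n := sqrt_pos.2 hn
  have hr : 0 < √(p * q) := sqrt_pos.2 (mul_pos hp hq)
  rw [mul_assoc, sqrt_mul hn.le, eq_div_iff (mul_pos hs hr).ne']
  field_simp
  linear_combination p * hp' - q * hq' + (p - q) * hpq

theorem inv_sqrt_mul_max_min_of_le (hq : 0 < q) (hqp : q ≤ p) (hp : p ≤ 1) (hn : 0 < n)
    (h : n ≤ q / p) : (√n)⁻¹ * max (min √(q / p) √n) (p * min √(p / q) √n) = 1 := by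
  rw [min_eq_right (sqrt_le_sqrt h),
    min_eq_right (sqrt_le_sqrt (h.trans (div_le_div_symm_of_le hq hqp))),
    max_eq_left (mul_le_of_le_one_left (sqrt_nonneg _) hp), inv_mul_cancel₀ (sqrt_pos.2 hn).ne']

theorem inv_sqrt_mul_max_min_of_between (hn : 0 < n) (h₁ : q / p < n) (h₂ : n ≤ p / q) :
    (√n)⁻¹ * max (min √(q / p) √n) (p * min √(p / q) √n) = max √(q / (n * p)) p := by
  rw [min_eq_left (sqrt_le_sqrt h₁.le), min_eq_right (sqrt_le_sqrt h₂),
    mul_max_of_nonneg _ _ (inv_nonneg.2 (sqrt_nonneg _)), inv_sqrt_mul_sqrt_div hn.le,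
    mul_left_comm, inv_mul_cancel₀ (sqrt_pos.2 hn).ne', mul_one]

theorem inv_sqrt_mul_max_min_of_lt (hq : 0 < q) (hqp : q ≤ p) (hn : 0 < n) (h : p / q < n) :
    (√n)⁻¹ * max (min √(q / p) √n) (p * min √(p / q) √n) =
      max √(q / (n * p)) √(p ^ 3 / (n * q)) := by
  rw [min_eq_left (sqrt_le_sqrt ((div_le_div_symm_of_le hq hqp).trans h.le)),
    min_eq_left (sqrt_le_sqrt h.le), mul_max_of_nonneg _ _ (inv_nonneg.2 (sqrt_nonneg _)),
    inv_sqrt_mul_sqrt_div hn.le, inv_sqrt_mul_mul_sqrt_div (hq.le.trans hqp) hn.le]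

theorem sSup_image_min_mul_two_step {a b s T : ℝ} (ha : 0 < a) (hab : a ≤ b) (hs : 0 < s)
    (haT : a < T) (hsT : s < T) (hp : 0 ≤ p) (hq : 0 ≤ q) (hpq : p + q = 1) :
    sSup ((fun z => min z s * ((if z ≤ a then q else 0) + (if z ≤ b then p else 0))) '' Ioo 0 T)
      = max (min a s) (p * min b s) := by
  set f := fun z => min z s * ((if z ≤ a then q else 0) + (if z ≤ b then p else 0))
  have hbound : ∀ z ∈ Ioo 0 T, f z ≤ max (min a s) (p * min b s) := by
    rintro z -
    simp only [f]
    split_ifs with hza hzb hzb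
    · rw [add_comm, hpq, mul_one]
      exact le_max_of_le_left (min_le_min_right s hza)
    · exact absurd (hza.trans hab) hzb
    · rw [zero_add, mul_comm]
      exact le_max_of_le_right (mul_le_mul_of_nonneg_left (min_le_min_right s hzb) hp)
    · rw [add_zero, mul_zero]
      exact le_max_of_le_left (le_min ha.le hs.le)
  have hbdd : BddAbove (f '' Ioo 0 T) := ⟨_, forall_mem_image.2 hbound⟩
  refine le_antisymm (csSup_le ((nonempty_Ioo.2 (ha.trans haT)).image f)
    (forall_mem_image.2 hbound)) (max_le ?_ ?_)
  · refine le_csSup_of_le hbdd (mem_image_of_mem f ⟨ha, haT⟩) ?_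
    rw [show f a = min a s by
      simp only [f, le_refl, ite_true, if_pos hab, add_comm q, hpq, mul_one]]
  · have hm : 0 < min b s := lt_min (ha.trans_le hab) hs
    refine le_csSup_of_le hbdd (mem_image_of_mem f ⟨hm, (min_le_right _ _).trans_lt hsT⟩) ?_
    have hq' : 0 ≤ if min b s ≤ a then q else 0 := by split_ifs <;> simp [hq]
    simp only [f, min_eq_left (min_le_right b s), if_pos (min_le_left b s), mul_comm p]
    exact mul_le_mul_of_nonneg_left (le_add_of_nonneg_left hq') hm.le

end Arithmetic

section TwoPoint

variable {Ω : Type*} [MeasurableSpace Ω] {μ : Measure Ω} [IsProbabilityMeasure μ]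
  {X : Ω → ℝ}

theorem integral_comp_eq_of_two_point {a b p q : ℝ} (hab : a ≠ b) (hp : 0 ≤ p) (hq : 0 ≤ q)
    (hpq : p + q = 1) (hX : Measurable X) (hXa : μ {ω | X ω = a} = ENNReal.ofReal p)
    (hXb : μ {ω | X ω = b} = ENNReal.ofReal q) (g : ℝ → ℝ) :
    ∫ ω, g (X ω) ∂μ = p * g a + q * g b := by
  have hA : MeasurableSet {ω | X ω = a} := hX (measurableSet_singleton a)
  have hB : MeasurableSet {ω | X ω = b} := hX (measurableSet_singleton b)
  have hdisj : Disjoint {ω | X ω = a} {ω | X ω = b} :=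
    disjoint_left.2 fun ω ha hb => hab (ha.symm.trans hb)
  have hae : ∀ᵐ ω ∂μ, X ω = a ∨ X ω = b := by
    refine (ae_iff_measure_eq ?_).2 ?_ <;> rw [ofPred_or]
    · exact (hA.union hB).nullMeasurableSet
    · rw [measure_union hdisj hB, hXa, hXb, ← ENNReal.ofReal_add hp hq, hpq, ENNReal.ofReal_one,
        measure_univ]
  have hcongr : (fun ω => g (X ω)) =ᵐ[μ]
      fun ω => {ω | X ω = a}.indicator (fun _ => g a) ω +
        {ω | X ω = b}.indicator (fun _ => g b) ω := by
    filter_upwards [hae] with ω hω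
    rcases hω with h | h
    · simp [h, hab]
    · simp [h, hab.symm]
  rw [integral_congr_ae hcongr,
    integral_add ((integrable_const _).indicator hA) ((integrable_const _).indicator hB),
    integral_indicator_const _ hA, integral_indicator_const _ hB, measureReal_def,
    measureReal_def, hXa, hXb, ENNReal.toReal_ofReal hp, ENNReal.toReal_ofReal hq, smul_eq_mul,
    smul_eq_mul]

variable {p q n ε : ℝ}

theorem mu3_two_point (hp : 0 < p) (hq : 0 < q) (hpq : p + q = 1) (hX : Measurable X)
    (hXp : μ {ω | X ω = √(q / p)} = ENNReal.ofReal p)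
    (hXq : μ {ω | X ω = -√(p / q)} = ENNReal.ofReal q) (t : ℝ) :
    mu3 μ X t = (if √(q / p) < t then q * √(q / p) else 0) -
      (if √(p / q) < t then p * √(p / q) else 0) := by
  refine (integral_comp_eq_of_two_point (sqrt_div_ne_neg_sqrt_div hp hq) hp.le hq.le hpq hX
    hXp hXq (fun x => if |x| < t then x ^ 3 else 0)).trans ?_
  have ha : p * √(q / p) ^ 3 = q * √(q / p) := by
    linear_combination √(q / p) * mul_sq_sqrt_div hp hq.le
  have hb : q * (-√(p / q)) ^ 3 = -(p * √(p / q)) := by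
    linear_combination -√(p / q) * mul_sq_sqrt_div hq hp.le
  simp only [abs_neg, abs_of_nonneg (sqrt_nonneg _), mul_ite, ha, hb, mul_zero]
  split_ifs <;> ring

theorem sig2_two_point (hp : 0 < p) (hq : 0 < q) (hpq : p + q = 1) (hX : Measurable X)
    (hXp : μ {ω | X ω = √(q / p)} = ENNReal.ofReal p)
    (hXq : μ {ω | X ω = -√(p / q)} = ENNReal.ofReal q) (z : ℝ) :
    sig2 μ X z = (if z ≤ √(q / p) then q else 0) + (if z ≤ √(p / q) then p else 0) := by
  refine (integral_comp_eq_of_two_point (sqrt_div_ne_neg_sqrt_div hp hq) hp.le hq.le hpq hX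
    hXp hXq (fun x => if z ≤ |x| then x ^ 2 else 0)).trans ?_
  simp only [abs_neg, abs_of_nonneg (sqrt_nonneg _), mul_ite, neg_sq, mul_sq_sqrt_div hp hq.le,
    mul_sq_sqrt_div hq hp.le, mul_zero]

theorem sSup_min_mul_sig2_two_point (hq : 0 < q) (hqp : q ≤ p) (hpq : p + q = 1)
    (hX : Measurable X) (hXp : μ {ω | X ω = √(q / p)} = ENNReal.ofReal p)
    (hXq : μ {ω | X ω = -√(p / q)} = ENNReal.ofReal q) (hn : 1 ≤ n) (hε : 1 < ε) :
    sSup ((fun z => min z √n * sig2 μ X z) '' Ioo 0 (ε * √n)) =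
      max (min √(q / p) √n) (p * min √(p / q) √n) := by
  have hp : 0 < p := hq.trans_le hqp
  have hs : 1 ≤ √n := one_le_sqrt.2 hn
  have hsT : √n < ε * √n := lt_mul_of_one_lt_left (by linarith) hε
  have ha1 : √(q / p) ≤ 1 := sqrt_le_one.2 ((div_le_one hp).2 hqp)
  simp only [sig2_two_point hp hq hpq hX hXp hXq]
  exact sSup_image_min_mul_two_step (sqrt_pos.2 (div_pos hq hp))
    (sqrt_le_sqrt (div_le_div_symm_of_le hq hqp)) (by linarith) (by linarith) hsT hp.le hq.le hpq

theorem inv_sqrt_mul_abs_mu3_two_point_of_le (hp : 0 < p) (hq : 0 < q) (hpq : p + q = 1)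
    (hX : Measurable X) (hXp : μ {ω | X ω = √(q / p)} = ENNReal.ofReal p)
    (hXq : μ {ω | X ω = -√(p / q)} = ENNReal.ofReal q) (hn : 0 < n) (hε : 0 < ε)
    (h₁ : q / p < n * ε ^ 2) (h₂ : n * ε ^ 2 ≤ p / q) :
    (√n)⁻¹ * |mu3 μ X (ε * √n)| = √(q ^ 3 / (n * p)) := by
  have ht : 0 < ε * √n := mul_pos hε (sqrt_pos.2 hn)
  have ht2 : (ε * √n) ^ 2 = n * ε ^ 2 := by rw [mul_pow, sq_sqrt hn.le, mul_comm]
  rw [mu3_two_point hp hq hpq hX hXp hXq, if_pos ((sqrt_lt' ht).2 (ht2 ▸ h₁)),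
    if_neg (not_lt.2 ((le_sqrt ht.le (div_pos hp hq).le).2 (ht2 ▸ h₂))), sub_zero,
    abs_of_nonneg (by positivity), inv_sqrt_mul_mul_sqrt_div hq.le hn.le]

theorem inv_sqrt_mul_abs_mu3_two_point_of_lt (hq : 0 < q) (hqp : q ≤ p) (hpq : p + q = 1)
    (hX : Measurable X) (hXp : μ {ω | X ω = √(q / p)} = ENNReal.ofReal p)
    (hXq : μ {ω | X ω = -√(p / q)} = ENNReal.ofReal q) (hn : 0 < n) (hε : 0 < ε)
    (h : p / q < n * ε ^ 2) :
    (√n)⁻¹ * |mu3 μ X (ε * √n)| = (p - q) / √(n * p * q) := by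
  have hp : 0 < p := hq.trans_le hqp
  have ht : 0 < ε * √n := mul_pos hε (sqrt_pos.2 hn)
  have ht2 : (ε * √n) ^ 2 = n * ε ^ 2 := by rw [mul_pow, sq_sqrt hn.le, mul_comm]
  have hba : q * √(q / p) ≤ p * √(p / q) :=
    mul_le_mul hqp (sqrt_le_sqrt (div_le_div_symm_of_le hq hqp)) (sqrt_nonneg _) hp.le
  rw [mu3_two_point hp hq hpq hX hXp hXq,
    if_pos ((sqrt_lt' ht).2 (ht2 ▸ (div_le_div_symm_of_le hq hqp).trans_lt h)),
    if_pos ((sqrt_lt' ht).2 (ht2 ▸ h)), abs_sub_comm, abs_of_nonneg (sub_nonneg.2 hba),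
    inv_sqrt_mul_sub_eq_div_sqrt hp hq hpq hn]

end TwoPoint

theorem rozovskii_fraction_g0_two_point_general
    {Ω : Type*} [MeasurableSpace Ω] (μ : Measure Ω) [IsProbabilityMeasure μ]
    (n : ℕ) (hn : 0 < n) (p : ℝ) (hp : p ∈ Set.Ico (1/2 : ℝ) 1) (q : ℝ) (hq : q = 1 - p)
    (X : Ω → ℝ) (hX : Measurable X)
    (hXp : μ {ω | X ω = Real.sqrt (q / p)} = ENNReal.ofReal p)
    (hXq : μ {ω | X ω = -Real.sqrt (p / q)} = ENNReal.ofReal q)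
    (ε γ : ℝ) (hε : 1 < ε)
    (L : ℝ)
    (hL : L = (Real.sqrt n)⁻¹ *
      (γ / ε * |mu3 μ X (ε * Real.sqrt n)| +
        sSup ((fun z => min z (Real.sqrt n) * sig2 μ X z) ''
          Set.Ioo (0 : ℝ) (ε * Real.sqrt n)))) :
    ((n : ℝ) ≤ q / p → q / p < (n : ℝ) * ε ^ 2 → (n : ℝ) * ε ^ 2 ≤ p / q →
      L = γ / ε * Real.sqrt (q ^ 3 / ((n : ℝ) * p)) + 1) ∧
    ((n : ℝ) ≤ q / p → q / p ≤ p / q → p / q < (n : ℝ) * ε ^ 2 →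
      L = γ * (p - q) / (ε * Real.sqrt ((n : ℝ) * p * q)) + 1) ∧
    (q / p < (n : ℝ) → (n : ℝ) * ε ^ 2 ≤ p / q →
      L = γ / ε * Real.sqrt (q ^ 3 / ((n : ℝ) * p)) +
            max (Real.sqrt (q / ((n : ℝ) * p))) p) ∧
    (q / p < (n : ℝ) → (n : ℝ) ≤ p / q → p / q < (n : ℝ) * ε ^ 2 →
      L = γ * (p - q) / (ε * Real.sqrt ((n : ℝ) * p * q)) +
            max (Real.sqrt (q / ((n : ℝ) * p))) p) ∧
    (p / q < (n : ℝ) →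
      L = γ * (p - q) / (ε * Real.sqrt ((n : ℝ) * p * q)) +
            max (Real.sqrt (q / ((n : ℝ) * p))) (Real.sqrt (p ^ 3 / ((n : ℝ) * q)))) := by
  obtain ⟨hp_half, hp_lt⟩ := hp
  have hq0 : 0 < q := by linarith
  have hqp : q ≤ p := by linarith
  have hpq : p + q = 1 := by linarith
  have hn1 : (1 : ℝ) ≤ n := by exact_mod_cast hn
  have hn0 : (0 : ℝ) < n := by linarith
  have hε0 : 0 < ε := by linarith
  have hnε : (n : ℝ) ≤ n * ε ^ 2 := le_mul_of_one_le_right hn0.le (by nlinarith)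
  have hL' : L = γ / ε * ((√n)⁻¹ * |mu3 μ X (ε * √n)|) +
      (√n)⁻¹ * max (min √(q / p) √n) (p * min √(p / q) √n) := by
    rw [hL, sSup_min_mul_sig2_two_point hq0 hqp hpq hX hXp hXq hn1 hε]
    ring
  have mu3_of_le := inv_sqrt_mul_abs_mu3_two_point_of_le (hq0.trans_le hqp) hq0 hpq hX hXp hXq
    hn0 hε0
  have mu3_of_lt := inv_sqrt_mul_abs_mu3_two_point_of_lt hq0 hqp hpq hX hXp hXq hn0 hε0
  refine ⟨fun h₁ h₂ h₃ => ?_, fun h₁ _ h₃ => ?_, fun h₁ h₂ => ?_,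
    fun h₁ h₂ h₃ => ?_, fun h₁ => ?_⟩ <;> rw [hL']
  · rw [mu3_of_le h₂ h₃, inv_sqrt_mul_max_min_of_le hq0 hqp hp_lt.le hn0 h₁]
  · rw [mu3_of_lt h₃, inv_sqrt_mul_max_min_of_le hq0 hqp hp_lt.le hn0 h₁]
    ring
  · rw [mu3_of_le (h₁.trans_le hnε) h₂,
      inv_sqrt_mul_max_min_of_between hn0 h₁ (hnε.trans h₂)]
  · rw [mu3_of_lt h₃, inv_sqrt_mul_max_min_of_between hn0 h₁ h₂]
    ring
  · rw [mu3_of_lt (h₁.trans_le hnε), inv_sqrt_mul_max_min_of_lt hq0 hqp hn0 h₁]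
    ring

theorem rozovskii_fraction_g0_two_point
    {Ω : Type*} [MeasurableSpace Ω] (μ : Measure Ω) [IsProbabilityMeasure μ]
    (n : ℕ) (hn : 0 < n) (p : ℝ) (hp : p ∈ Set.Ico (1/2 : ℝ) 1) (q : ℝ) (hq : q = 1 - p)
    (X : Ω → ℝ) (hX : Measurable X)
    (hXp : μ {ω | X ω = Real.sqrt (q / p)} = ENNReal.ofReal p)
    (hXq : μ {ω | X ω = -Real.sqrt (p / q)} = ENNReal.ofReal q)
    (ε γ : ℝ) (hε : 1 < ε) (hγ : 0 < γ)
    (L : ℝ)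
    (hL : L = (Real.sqrt n)⁻¹ *
      (γ / ε * |mu3 μ X (ε * Real.sqrt n)| +
        sSup ((fun z => min z (Real.sqrt n) * sig2 μ X z) ''
          Set.Ioo (0 : ℝ) (ε * Real.sqrt n)))) :
    ((n : ℝ) ≤ q / p → q / p < (n : ℝ) * ε ^ 2 → (n : ℝ) * ε ^ 2 ≤ p / q →
      L = γ / ε * Real.sqrt (q ^ 3 / ((n : ℝ) * p)) + 1) ∧
    ((n : ℝ) ≤ q / p → q / p ≤ p / q → p / q < (n : ℝ) * ε ^ 2 →
      L = γ * (p - q) / (ε * Real.sqrt ((n : ℝ) * p * q)) + 1) ∧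
    (q / p < (n : ℝ) → (n : ℝ) * ε ^ 2 ≤ p / q →
      L = γ / ε * Real.sqrt (q ^ 3 / ((n : ℝ) * p)) +
            max (Real.sqrt (q / ((n : ℝ) * p))) p) ∧
    (q / p < (n : ℝ) → (n : ℝ) ≤ p / q → p / q < (n : ℝ) * ε ^ 2 →
      L = γ * (p - q) / (ε * Real.sqrt ((n : ℝ) * p * q)) +
            max (Real.sqrt (q / ((n : ℝ) * p))) p) ∧
    (p / q < (n : ℝ) →
      L = γ * (p - q) / (ε * Real.sqrt ((n : ℝ) * p * q)) +
            max (Real.sqrt (q / ((n : ℝ) * p))) (Real.sqrt (p ^ 3 / ((n : ℝ) * q)))) :=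
  rozovskii_fraction_g0_two_point_general μ n hn p hp q hq X hX hXp hXq ε γ hε L hL
end

section
/- Fix ε > 0 and γ > 0. (a) If C ≥ 0 is such that for every n ∈ ℕ and all independent random variables X_1,…,X_n with E X_k = 0, E X_k² < ∞ and B_n² = Σ_k E X_k² > 0 one has Δ_n ≤ C·sup_{0<z<ε}( γ·|M_n(z)| + z·L_n(z) ), then C ≥ (Φ(1) − 1/2)/min{1,ε} > 0.3413/min{1,ε}. (b) The same conclusion C ≥ (Φ(1) − 1/2)/min{1,ε} holds if instead Δ_n ≤ C·( γ·|M_n(ε)| + sup_{0<z<ε} z·L_n(z) ) for all such n and X_1,…,X_n. -/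
open MeasureTheory ProbabilityTheory Real Set

/-- The standard normal distribution function. -/
noncomputable def Phi (x : ℝ) : ℝ :=
  ∫ t in Set.Iic x, Real.exp (-t ^ 2 / 2) / Real.sqrt (2 * Real.pi)

/-- `B_n = sqrt (Σ E X_k²)`. -/
noncomputable def Bn {Ω : Type} [MeasurableSpace Ω] (μ : Measure Ω) {n : ℕ}
    (X : Fin n → Ω → ℝ) : ℝ :=
  Real.sqrt (∑ k, ∫ ω, (X k ω) ^ 2 ∂μ)

/-- Uniform distance between the d.f. of the normalized sum and the standard normal d.f. -/
noncomputable def Deltan {Ω : Type} [MeasurableSpace Ω] (μ : Measure Ω) {n : ℕ}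
    (X : Fin n → Ω → ℝ) : ℝ :=
  ⨆ x : ℝ, |(μ {ω | (∑ k, X k ω) / Bn μ X < x}).toReal - Phi x|

/-- `M_n(z) = B_n⁻³ Σ E[X_k³ 1_{|X_k| < z B_n}]`. -/
noncomputable def Mn {Ω : Type} [MeasurableSpace Ω] (μ : Measure Ω) {n : ℕ}
    (X : Fin n → Ω → ℝ) (z : ℝ) : ℝ :=
  (∑ k, ∫ ω, (if |X k ω| < z * Bn μ X then (X k ω) ^ 3 else 0) ∂μ) / (Bn μ X) ^ 3

/-- `L_n(z) = B_n⁻² Σ E[X_k² 1_{|X_k| ≥ z B_n}]` (the Lindeberg fraction). -/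
noncomputable def Lnn {Ω : Type} [MeasurableSpace Ω] (μ : Measure Ω) {n : ℕ}
    (X : Fin n → Ω → ℝ) (z : ℝ) : ℝ :=
  (∑ k, ∫ ω, (if z * Bn μ X ≤ |X k ω| then (X k ω) ^ 2 else 0) ∂μ) / (Bn μ X) ^ 2

/-!
The extremal example is a single Rademacher variable `X = ±1` (`n = 1`). By symmetry its truncated
third moments vanish, so `M_1 ≡ 0`, while `L_1(z) = 1` for `z ≤ 1` and `0` otherwise; hence both
right-hand sides are at most `C · min 1 ε`. On the other hand `P(X < 1) = 1/2`, so
`Δ_1 ≥ Φ(1) - 1/2`. The numerical bound `Φ(1) - 1/2 > 0.3413` follows by integrating over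
`[0, 1]` a Taylor lower bound for `exp (-t ^ 2 / 2)` and using `π < 3.141593`.
-/

lemma exp_neg_sq_div_two_eq :
    (fun t : ℝ => exp (-t ^ 2 / 2)) = fun t => exp (-(1 / 2) * t ^ 2) := by
  ext t; ring_nf

lemma integrable_exp_neg_sq_div_two : Integrable fun t : ℝ => exp (-t ^ 2 / 2) := by
  rw [exp_neg_sq_div_two_eq]; exact integrable_exp_neg_mul_sq one_half_pos

lemma integral_exp_neg_sq_div_two : ∫ t, exp (-t ^ 2 / 2) = √(2 * π) := by
  rw [exp_neg_sq_div_two_eq, integral_gaussian, div_div_eq_mul_div, div_one, mul_comm]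

lemma integral_Iic_zero_exp_neg_sq_div_two :
    ∫ t in Iic 0, exp (-t ^ 2 / 2) = √(2 * π) / 2 := by
  have h := integral_comp_neg_Iic 0 fun t => exp (-t ^ 2 / 2)
  simp only [neg_zero, even_two, Even.neg_pow] at h
  rw [h, exp_neg_sq_div_two_eq, integral_gaussian_Ioi, div_div_eq_mul_div, div_one, mul_comm]

lemma Phi_eq_div (x : ℝ) : Phi x = (∫ t in Iic x, exp (-t ^ 2 / 2)) / √(2 * π) := by
  rw [Phi, integral_div]

lemma Phi_zero : Phi 0 = 1 / 2 := by
  rw [Phi_eq_div, integral_Iic_zero_exp_neg_sq_div_two]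
  field_simp

lemma Phi_nonneg (x : ℝ) : 0 ≤ Phi x :=
  setIntegral_nonneg measurableSet_Iic fun _ _ => by positivity

lemma Phi_le_one (x : ℝ) : Phi x ≤ 1 := by
  rw [Phi_eq_div, div_le_one (by positivity), ← integral_exp_neg_sq_div_two]
  exact setIntegral_le_integral integrable_exp_neg_sq_div_two (.of_forall fun _ => by positivity)

lemma Phi_sub_Phi (a b : ℝ) :
    Phi b - Phi a = (∫ t in a..b, exp (-t ^ 2 / 2)) / √(2 * π) := by
  rw [Phi_eq_div, Phi_eq_div, div_sub_div_same, intervalIntegral.integral_Iic_sub_Iic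
    integrable_exp_neg_sq_div_two.integrableOn integrable_exp_neg_sq_div_two.integrableOn]

-- `Real.exp_bound` with five terms: the remainder is at most `u ^ 5 * 6 / (5! * 5) = u ^ 5 / 100`.
lemma taylor_le_exp_neg {u : ℝ} (h0 : 0 ≤ u) (h1 : u ≤ 1) :
    1 - u + u ^ 2 / 2 - u ^ 3 / 6 + u ^ 4 / 24 - u ^ 5 / 100 ≤ exp (-u) := by
  have h := (abs_le.1 (Real.exp_bound (x := -u) (by rwa [abs_neg, abs_of_nonneg h0]) (n := 5)
    (by norm_num))).1
  simp only [Finset.sum_range_succ, Finset.sum_range_zero, abs_neg, abs_of_nonneg h0] at h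
  norm_num [Nat.factorial] at h
  linarith

lemma taylor_le_exp_neg_sq_div_two {t : ℝ} (ht : t ^ 2 ≤ 2) :
    1 - t ^ 2 / 2 + t ^ 4 / 8 - t ^ 6 / 48 + t ^ 8 / 384 - t ^ 10 / 3200 ≤ exp (-t ^ 2 / 2) := by
  convert taylor_le_exp_neg (u := t ^ 2 / 2) (by positivity) (by linarith) using 1 <;> ring_nf

lemma integral_taylor_exp_neg_sq_div_two :
    ∫ t in (0 : ℝ)..1, (1 - t ^ 2 / 2 + t ^ 4 / 8 - t ^ 6 / 48 + t ^ 8 / 384 - t ^ 10 / 3200)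
      = 177883 / 207900 := by
  simp (disch := apply Continuous.intervalIntegrable; fun_prop) only [integral_pow,
    intervalIntegral.integral_sub, intervalIntegral.integral_add, intervalIntegral.integral_div,
    intervalIntegral.integral_const]
  norm_num

lemma lt_Phi_one_sub_half : (0.3413 : ℝ) < Phi 1 - 1 / 2 := by
  have hint : 177883 / 207900 ≤ ∫ t in (0 : ℝ)..1, exp (-t ^ 2 / 2) := by
    rw [← integral_taylor_exp_neg_sq_div_two]
    refine intervalIntegral.integral_mono_on zero_le_one (Continuous.intervalIntegrable
      (by fun_prop) _ _) integrable_exp_neg_sq_div_two.intervalIntegrable fun t ht => ?_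
    exact taylor_le_exp_neg_sq_div_two (by nlinarith [ht.1, ht.2])
  have hsqrt : √(2 * π) < 177883 / 207900 / 0.3413 := by
    rw [Real.sqrt_lt' (by norm_num)]
    nlinarith [pi_lt_d6]
  rw [← Phi_zero, Phi_sub_Phi, lt_div_iff₀ (by positivity)]
  calc 0.3413 * √(2 * π) < 177883 / 207900 := by
        rwa [lt_div_iff₀ (by norm_num), mul_comm] at hsqrt
    _ ≤ _ := hint

lemma abs_sub_Phi_le_Deltan {Ω : Type} [MeasurableSpace Ω] (μ : Measure Ω)
    [IsProbabilityMeasure μ] {n : ℕ} (X : Fin n → Ω → ℝ) (x : ℝ) :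
    |(μ {ω | (∑ k, X k ω) / Bn μ X < x}).toReal - Phi x| ≤ Deltan μ X := by
  refine le_ciSup (f := fun x => |(μ {ω | (∑ k, X k ω) / Bn μ X < x}).toReal - Phi x|)
    ⟨1, ?_⟩ x
  rintro _ ⟨y, rfl⟩
  exact abs_sub_le_of_nonneg_of_le ENNReal.toReal_nonneg measureReal_le_one (Phi_nonneg y)
    (Phi_le_one y)

noncomputable def rademacher : Measure ℝ :=
  bernoulliMeasure 1 (-1) ⟨1 / 2, by norm_num, by norm_num⟩

instance : IsProbabilityMeasure rademacher := by
  rw [rademacher]; infer_instance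

lemma rademacher_real_Iio_one : rademacher.real (Iio 1) = 1 / 2 := by
  rw [rademacher, bernoulliMeasure_real_apply_of_notMem_of_mem _ measurableSet_Iio (by simp)
    (by norm_num)]
  norm_num

lemma integral_rademacher (f : ℝ → ℝ) : ∫ ω, f ω ∂rademacher = (f 1 + f (-1)) / 2 := by
  rw [rademacher, integral_bernoulliMeasure]
  norm_num
  ring

lemma sum_integral_sq_rademacher : ∑ _ : Fin 1, ∫ ω, (id ω) ^ 2 ∂rademacher = 1 := by
  simp [integral_rademacher]

lemma Bn_rademacher : Bn rademacher (fun _ : Fin 1 => id) = 1 := by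
  rw [Bn, sum_integral_sq_rademacher, sqrt_one]

lemma Mn_rademacher (z : ℝ) : Mn rademacher (fun _ : Fin 1 => id) z = 0 := by
  simp only [Mn, Bn_rademacher, integral_rademacher, id, abs_neg]
  split_ifs <;> norm_num

lemma Lnn_rademacher (z : ℝ) :
    Lnn rademacher (fun _ : Fin 1 => id) z = if z ≤ 1 then 1 else 0 := by
  simp [Lnn, Bn_rademacher, integral_rademacher]

lemma Phi_one_sub_half_le_Deltan_rademacher :
    Phi 1 - 1 / 2 ≤ Deltan rademacher (fun _ : Fin 1 => id) := by
  have hset :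
      {ω : ℝ | (∑ _ : Fin 1, id ω) / Bn rademacher (fun _ : Fin 1 => id) < 1} = Iio 1 := by
    ext ω; simp [Bn_rademacher]
  have h := abs_sub_Phi_le_Deltan rademacher (fun _ : Fin 1 => id) 1
  rwa [hset, ← measureReal_def, rademacher_real_Iio_one, abs_sub_comm,
    abs_of_pos (by linarith [lt_Phi_one_sub_half])] at h

lemma sSup_mul_Lnn_rademacher_le {ε : ℝ} (hε : 0 < ε) :
    sSup ((fun z => z * Lnn rademacher (fun _ : Fin 1 => id) z) '' Ioo 0 ε) ≤ min 1 ε := by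
  refine Real.sSup_le ?_ (by positivity)
  rintro _ ⟨z, hz, rfl⟩
  dsimp only
  rw [Lnn_rademacher]
  split_ifs with hz1
  · rw [mul_one]; exact le_min hz1 hz.2.le
  · rw [mul_zero]; positivity

lemma div_min_le_of_Deltan_rademacher_le {ε C : ℝ} (hε : 0 < ε) (hC : 0 ≤ C)
    (h : Deltan rademacher (fun _ : Fin 1 => id) ≤
      C * sSup ((fun z => z * Lnn rademacher (fun _ : Fin 1 => id) z) '' Ioo 0 ε)) :
    (Phi 1 - 1 / 2) / min 1 ε ≤ C := by
  rw [div_le_iff₀ (lt_min one_pos hε)]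
  calc Phi 1 - 1 / 2 ≤ Deltan rademacher (fun _ : Fin 1 => id) :=
        Phi_one_sub_half_le_Deltan_rademacher
    _ ≤ _ := h
    _ ≤ C * min 1 ε := mul_le_mul_of_nonneg_left (sSup_mul_Lnn_rademacher_le hε) hC

theorem lower_bound_esseen_rozovskii_constants_general (ε γ : ℝ) (hε : 0 < ε) :
    (∀ C : ℝ, 0 ≤ C →
      (∀ (Ω : Type) (mΩ : MeasurableSpace Ω) (μ : Measure Ω), IsProbabilityMeasure μ →
        ∀ (n : ℕ) (X : Fin n → Ω → ℝ),
          (∀ k, Measurable (X k)) →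
          iIndepFun X μ →
          (∀ k, Integrable (fun ω => (X k ω) ^ 2) μ) →
          (∀ k, ∫ ω, X k ω ∂μ = 0) →
          0 < ∑ k, ∫ ω, (X k ω) ^ 2 ∂μ →
          Deltan μ X ≤
            C * sSup ((fun z => γ * |Mn μ X z| + z * Lnn μ X z) '' Set.Ioo (0 : ℝ) ε)) →
      (Phi 1 - 1/2) / min 1 ε ≤ C) ∧
    (∀ C : ℝ, 0 ≤ C →
      (∀ (Ω : Type) (mΩ : MeasurableSpace Ω) (μ : Measure Ω), IsProbabilityMeasure μ →
        ∀ (n : ℕ) (X : Fin n → Ω → ℝ),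
          (∀ k, Measurable (X k)) →
          iIndepFun X μ →
          (∀ k, Integrable (fun ω => (X k ω) ^ 2) μ) →
          (∀ k, ∫ ω, X k ω ∂μ = 0) →
          0 < ∑ k, ∫ ω, (X k ω) ^ 2 ∂μ →
          Deltan μ X ≤
            C * (γ * |Mn μ X ε| +
              sSup ((fun z => z * Lnn μ X z) '' Set.Ioo (0 : ℝ) ε))) →
      (Phi 1 - 1/2) / min 1 ε ≤ C) ∧
    0.3413 / min 1 ε < (Phi 1 - 1/2) / min 1 ε := by
  have hmeas : ∀ _ : Fin 1, Measurable (id : ℝ → ℝ) := fun _ => measurable_id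
  have hint : ∀ _ : Fin 1, Integrable (fun ω : ℝ => (id ω) ^ 2) rademacher :=
    fun _ => integrable_bernoulliMeasure _ _ _ _
  have hmean : ∀ _ : Fin 1, ∫ ω, id ω ∂rademacher = 0 :=
    fun _ => by simp [integral_rademacher]
  have hvar : 0 < ∑ _ : Fin 1, ∫ ω, (id ω) ^ 2 ∂rademacher := by
    rw [sum_integral_sq_rademacher]; exact one_pos
  refine ⟨fun C hC h => ?_, fun C hC h => ?_,
    div_lt_div_of_pos_right lt_Phi_one_sub_half (lt_min one_pos hε)⟩
  all_goals
    refine div_min_le_of_Deltan_rademacher_le hε hC ?_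
    simpa only [Mn_rademacher, abs_zero, mul_zero, zero_add] using
      h ℝ _ rademacher inferInstance 1 _ hmeas .of_subsingleton hint hmean hvar

theorem lower_bound_esseen_rozovskii_constants (ε γ : ℝ) (hε : 0 < ε) (hγ : 0 < γ) :
    (∀ C : ℝ, 0 ≤ C →
      (∀ (Ω : Type) (mΩ : MeasurableSpace Ω) (μ : Measure Ω), IsProbabilityMeasure μ →
        ∀ (n : ℕ) (X : Fin n → Ω → ℝ),
          (∀ k, Measurable (X k)) →
          iIndepFun X μ →
          (∀ k, Integrable (fun ω => (X k ω) ^ 2) μ) →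
          (∀ k, ∫ ω, X k ω ∂μ = 0) →
          0 < ∑ k, ∫ ω, (X k ω) ^ 2 ∂μ →
          Deltan μ X ≤
            C * sSup ((fun z => γ * |Mn μ X z| + z * Lnn μ X z) '' Set.Ioo (0 : ℝ) ε)) →
      (Phi 1 - 1/2) / min 1 ε ≤ C) ∧
    (∀ C : ℝ, 0 ≤ C →
      (∀ (Ω : Type) (mΩ : MeasurableSpace Ω) (μ : Measure Ω), IsProbabilityMeasure μ →
        ∀ (n : ℕ) (X : Fin n → Ω → ℝ),
          (∀ k, Measurable (X k)) →
          iIndepFun X μ →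
          (∀ k, Integrable (fun ω => (X k ω) ^ 2) μ) →
          (∀ k, ∫ ω, X k ω ∂μ = 0) →
          0 < ∑ k, ∫ ω, (X k ω) ^ 2 ∂μ →
          Deltan μ X ≤
            C * (γ * |Mn μ X ε| +
              sSup ((fun z => z * Lnn μ X z) '' Set.Ioo (0 : ℝ) ε))) →
      (Phi 1 - 1/2) / min 1 ε ≤ C) ∧
    0.3413 / min 1 ε < (Phi 1 - 1/2) / min 1 ε :=
  lower_bound_esseen_rozovskii_constants_general ε γ hε
end
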